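/- Let G be a finite group with trivial center such that the trivial subgroup belongs to the Chermak–Delgado lattice CD(G) (equivalently m*(G) = |G|). Then CD(G) contains no subgroup of prime order. -/

import Mathlib

open Pointwise

/-- Chermak–Delgado measure of a subgroup. -/
noncomputable def mCD (G : Type*) [Group G] (H : Subgroup G) : ℕ :=
  Nat.card H * Nat.card (Subgroup.centralizer (H : Set G))

/-- Maximal Chermak–Delgado measure. -/
noncomputable def mStar (G : Type*) [Group G] : ℕ :=
  sSup (Set.range (mCD G))

/-- Chermak–Delgado lattice (as a set of subgroups). -/
def CD (G : Type*) [Group G] : Set (Subgroup G) :=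
  {H | mCD G H = mStar G}

/-- A group has dense CD-subgroups if for all subgroups H < K with H not
maximal in K, there exists X in CD(G) with H < X < K. -/
def DenseCD (G : Type*) [Group G] : Prop :=
  ∀ H K : Subgroup G, H < K → (∃ L : Subgroup G, H < L ∧ L < K) →
    ∃ X ∈ CD G, H < X ∧ X < K


/-!
Since `|A| |B| ≤ |A ⊔ B| |A ⊓ B|`, and likewise for the centralizers with `C(A ⊔ B) = C(A) ⊓ C(B)`
and `C(A) ⊔ C(B) ≤ C(A ⊓ B)`, the measure `m = mCD G` is supermodular: `m(A) m(B) ≤ m(A ⊔ B) m(A ⊓ B)`.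
For `A, B ∈ CD(G)` all these inequalities are equalities, so `A ⊔ B ∈ CD(G)` and
`|A ⊔ B| |A ⊓ B| = |A| |B|`; hence the `p`-subgroups in `CD(G)` have a largest element `P`,
which is characteristic. If `H ∈ CD(G)` has prime order `p`, then `H ≤ P`, and `1 ∈ CD(G)` gives
`|P| |C(P)| = |G|`, so the image of `G` in `Aut(P)` is a `p`-group. A `p`-group acting on the
nontrivial `p`-group `P` fixes some `x ≠ 1`, which is then central in `G`.
-/

namespace Subgroup

variable {G : Type*} [Group G]

theorem card_mul_relIndex {H K : Subgroup G} (h : H ≤ K) :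
    Nat.card H * H.relIndex K = Nat.card K := by
  rw [← relIndex_bot_left, ← relIndex_bot_left, relIndex_mul_relIndex _ _ _ bot_le h]

theorem card_mul_card_le_card_sup_mul_card_inf [Finite G] (A B : Subgroup G) :
    Nat.card A * Nat.card B ≤ Nat.card ↥(A ⊔ B) * Nat.card ↥(A ⊓ B) := by
  have hA := card_mul_relIndex (inf_le_left : A ⊓ B ≤ A)
  have hB := card_mul_relIndex (le_sup_right : B ≤ A ⊔ B)
  have hle : B.relIndex A ≤ B.relIndex (A ⊔ B) :=
    relIndex_le_of_le_right le_sup_left (right_ne_zero_of_mul (hB ▸ Nat.card_pos.ne'))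
  rw [inf_relIndex_left] at hA
  rw [← hA, ← hB]
  calc Nat.card ↥(A ⊓ B) * B.relIndex A * Nat.card B
      ≤ Nat.card ↥(A ⊓ B) * B.relIndex (A ⊔ B) * Nat.card B := by gcongr
    _ = _ := by ring

theorem centralizer_sup (A B : Subgroup G) :
    centralizer ((A ⊔ B : Subgroup G) : Set G) = centralizer A ⊓ centralizer B :=
  le_antisymm
    (le_inf (centralizer_le (le_sup_left (b := B))) (centralizer_le (le_sup_right (a := A))))
    (le_centralizer_iff.mpr
      (sup_le (le_centralizer_iff.mp inf_le_left) (le_centralizer_iff.mp inf_le_right)))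

theorem card_centralizer_mul_card_centralizer_le [Finite G] (A B : Subgroup G) :
    Nat.card (centralizer (A : Set G)) * Nat.card (centralizer (B : Set G)) ≤
      Nat.card (centralizer ((A ⊔ B : Subgroup G) : Set G)) *
        Nat.card (centralizer ((A ⊓ B : Subgroup G) : Set G)) := by
  rw [centralizer_sup, mul_comm (Nat.card ↥(centralizer (A : Set G) ⊓ centralizer (B : Set G)))]
  refine (card_mul_card_le_card_sup_mul_card_inf _ _).trans (Nat.mul_le_mul_right _ ?_)
  exact card_le_of_le (sup_le (centralizer_le inf_le_left) (centralizer_le inf_le_right))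

theorem map_equiv_centralizer {G' : Type*} [Group G'] (e : G ≃* G') (K : Subgroup G) :
    (centralizer (K : Set G)).map e.toMonoidHom = centralizer (K.map e.toMonoidHom : Set G') := by
  ext x
  simp only [mem_map_equiv, mem_centralizer_iff, SetLike.mem_coe]
  constructor
  · intro h y hy
    simpa using congrArg e (h _ hy)
  · intro h y hy
    simpa using congrArg e.symm (h (e y) (by simpa using hy))

theorem characteristic_sSup_of_map_mem {S : Set (Subgroup G)}
    (hS : ∀ e : G ≃* G, ∀ K ∈ S, K.map e.toMonoidHom ∈ S) : (sSup S).Characteristic := by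
  refine characteristic_iff_map_le.mpr fun e => ?_
  rw [(gc_map_comap e.toMonoidHom).l_sSup]
  exact iSup₂_le fun K hK => le_sSup (hS e K hK)

theorem ker_conjNormal (P : Subgroup G) [P.Normal] :
    (MulAut.conjNormal (H := P)).ker = centralizer (P : Set G) := by
  ext g
  simp only [MonoidHom.mem_ker, mem_centralizer_iff, MulEquiv.ext_iff, Subtype.ext_iff,
    MulAut.conjNormal_apply, MulAut.one_apply, SetLike.mem_coe, Subtype.forall]
  refine forall₂_congr fun h _ => ?_
  rw [mul_inv_eq_iff_eq_mul, eq_comm]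

theorem exists_ne_one_mem_center_of_index_centralizer_eq_pow [Finite G] {p : ℕ} [Fact p.Prime]
    (P : Subgroup G) [P.Normal] {n : ℕ} (hindex : (centralizer (P : Set G)).index = p ^ n)
    (hdvd : p ∣ Nat.card P) : ∃ x ∈ P, x ≠ 1 ∧ x ∈ center G := by
  set R := (MulAut.conjNormal (H := P)).range
  -- `R ≅ G / C_G(P)` acts on `P` with the same fixed points as `G`.
  have hR : IsPGroup p R := IsPGroup.of_card (n := n) (by rw [← index_ker, ker_conjNormal, hindex])
  obtain ⟨x, hx, hx1⟩ := hR.exists_fixed_point_of_prime_dvd_card_of_fixed_point P hdvd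
    (a := 1) fun r => smul_one r
  refine ⟨x, x.2, fun h => hx1 (Subtype.ext h.symm), mem_center_iff.mpr fun g => ?_⟩
  have hg : MulAut.conjNormal g x = x := hx ⟨_, g, rfl⟩
  rw [← mul_inv_eq_iff_eq_mul, ← MulAut.conjNormal_apply, hg]

end Subgroup

section ChermakDelgado

variable {G : Type*} [Group G]

theorem mCD_pos [Finite G] (H : Subgroup G) : 0 < mCD G H :=
  Nat.mul_pos Nat.card_pos Nat.card_pos

theorem mCD_le_mStar [Finite G] (H : Subgroup G) : mCD G H ≤ mStar G :=
  le_csSup (Set.finite_range _).bddAbove ⟨H, rfl⟩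

theorem mCD_bot : mCD G ⊥ = Nat.card G := by
  rw [mCD, Subgroup.card_bot, one_mul, top_le_iff.mp (Subgroup.le_centralizer_iff.mpr bot_le),
    Subgroup.card_top]

theorem mCD_map_equiv (e : G ≃* G) (H : Subgroup G) : mCD G (H.map e.toMonoidHom) = mCD G H := by
  rw [mCD, mCD, ← Subgroup.map_equiv_centralizer, Subgroup.card_map_of_injective e.injective,
    Subgroup.card_map_of_injective e.injective]

theorem map_equiv_mem_CD (e : G ≃* G) {H : Subgroup G} (hH : H ∈ CD G) :
    H.map e.toMonoidHom ∈ CD G :=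
  (mCD_map_equiv e H).trans hH

theorem mCD_mul_mCD_le [Finite G] (A B : Subgroup G) :
    mCD G A * mCD G B ≤ mCD G (A ⊔ B) * mCD G (A ⊓ B) := by
  have h := Nat.mul_le_mul (Subgroup.card_mul_card_le_card_sup_mul_card_inf A B)
    (Subgroup.card_centralizer_mul_card_centralizer_le A B)
  simp only [mCD]
  calc _ = _ := by ring
    _ ≤ _ := h
    _ = _ := by ring

theorem sup_mem_CD_and_card_sup_mul_card_inf [Finite G] {A B : Subgroup G} (hA : A ∈ CD G)
    (hB : B ∈ CD G) :
    A ⊔ B ∈ CD G ∧ Nat.card ↥(A ⊔ B) * Nat.card ↥(A ⊓ B) = Nat.card A * Nat.card B := by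
  have hsup := mCD_le_mStar (A ⊔ B)
  have hinf := mCD_le_mStar (A ⊓ B)
  have hAB : mCD G A * mCD G B = mStar G * mStar G := congrArg₂ (· * ·) hA hB
  have hprod := mCD_mul_mCD_le A B
  refine ⟨le_antisymm hsup ?_, ?_⟩
  · nlinarith [mCD_pos (A ⊓ B)]
  · set c := Nat.card (Subgroup.centralizer (A : Set G)) *
      Nat.card (Subgroup.centralizer (B : Set G))
    have hc : 0 < c := Nat.mul_pos Nat.card_pos Nat.card_pos
    have : Nat.card ↥(A ⊔ B) * Nat.card ↥(A ⊓ B) * c ≤ Nat.card A * Nat.card B * c :=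
      calc _ ≤ Nat.card ↥(A ⊔ B) * Nat.card ↥(A ⊓ B) *
              (Nat.card (Subgroup.centralizer ((A ⊔ B : Subgroup G) : Set G)) *
                Nat.card (Subgroup.centralizer ((A ⊓ B : Subgroup G) : Set G))) :=
            Nat.mul_le_mul_left _ (Subgroup.card_centralizer_mul_card_centralizer_le A B)
        _ = mCD G (A ⊔ B) * mCD G (A ⊓ B) := by simp only [mCD]; ring
        _ ≤ mCD G A * mCD G B := hAB ▸ Nat.mul_le_mul hsup hinf
        _ = _ := by simp only [mCD, c]; ring
    exact le_antisymm (Nat.le_of_mul_le_mul_right this hc)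
      (Subgroup.card_mul_card_le_card_sup_mul_card_inf A B)

theorem supClosed_CD_isPGroup [Finite G] (p : ℕ) [Fact p.Prime] :
    SupClosed {K : Subgroup G | K ∈ CD G ∧ IsPGroup p K} := by
  rintro A ⟨hA, hAp⟩ B ⟨hB, hBp⟩
  obtain ⟨hsup, hcard⟩ := sup_mem_CD_and_card_sup_mul_card_inf hA hB
  obtain ⟨k, hk⟩ := IsPGroup.iff_card.mp hAp
  obtain ⟨l, hl⟩ := IsPGroup.iff_card.mp hBp
  have hdvd : Nat.card ↥(A ⊔ B) ∣ p ^ (k + l) := ⟨_, by rw [pow_add, ← hk, ← hl, ← hcard]⟩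
  obtain ⟨m, -, hm⟩ := (Nat.dvd_prime_pow Fact.out).mp hdvd
  exact ⟨hsup, IsPGroup.of_card hm⟩

end ChermakDelgado

theorem stmt14 (G : Type*) [Group G] [Finite G] (hz : Subgroup.center G = ⊥)
    (hbot : (⊥ : Subgroup G) ∈ CD G) :
    ∀ H ∈ CD G, ¬ (Nat.card H).Prime := by
  intro H hH hp
  set p := Nat.card H
  have : Fact p.Prime := ⟨hp⟩
  set S := {K : Subgroup G | K ∈ CD G ∧ IsPGroup p K}
  set P := sSup S
  obtain ⟨hPCD, hPp⟩ : P ∈ S :=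
    (supClosed_CD_isPGroup p).sSup_mem (Set.toFinite S) ⟨hbot, IsPGroup.of_bot⟩ subset_rfl
  have hHP : H ≤ P := le_sSup ⟨hH, IsPGroup.of_card (pow_one p).symm⟩
  have : P.Characteristic := Subgroup.characteristic_sSup_of_map_mem
    fun e K hK => ⟨map_equiv_mem_CD e hK.1, hK.2.map _⟩
  obtain ⟨n, hn⟩ := IsPGroup.iff_card.mp hPp
  have hindex : (Subgroup.centralizer (P : Set G)).index = p ^ n := by
    have hPC : Nat.card P * Nat.card (Subgroup.centralizer (P : Set G)) = Nat.card G :=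
      hPCD.trans (hbot.symm.trans mCD_bot)
    rw [← hn]
    refine Nat.eq_of_mul_eq_mul_left (Nat.card_pos (α := Subgroup.centralizer (P : Set G))) ?_
    rw [Subgroup.card_mul_index, ← hPC, mul_comm]
  obtain ⟨x, -, hx1, hxZ⟩ :=
    Subgroup.exists_ne_one_mem_center_of_index_centralizer_eq_pow P hindex
      (Subgroup.card_dvd_of_le hHP)
  rw [hz, Subgroup.mem_bot] at hxZ
  exact hx1 hxZ
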